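/- arXiv:2311.10680 — 2 statements merged into one kernel-verified Lean document; each statement's English description precedes it below -/
import Mathlib

section
/- Let A be an n×d matrix, b ∈ ℝⁿ, g : ℝᵈ → ℝ_{≥0}, C ⊆ ℝᵈ nonempty, and define f(x) = ‖Ax − b‖² + g(x). Let S be an m×n matrix such that (1+ε)⁻¹‖[A|b]y‖ ≤ ‖S[A|b]y‖ ≤ (1+ε)‖[A|b]y‖ for all y ∈ ℝ^{d+1}, where ε ∈ (0,1/2). Define f̃(x) = ‖SAx − Sb‖² + g(x). If x̃ ∈ C satisfies f̃(x̃) ≤ (1+ε)·inf_{x∈C} f̃(x), then f(x̃) ≤ (1+ε)⁶ · inf_{x∈C} f(x) ≤ (1+10ε)·inf_{x∈C} f(x). -/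
open Matrix

/-- The matrix `[A|b]`: `A` with `b` appended as an extra column. -/
def Matrix.appendCol {n d : ℕ} (A : Matrix (Fin n) (Fin d) ℝ) (b : Fin n → ℝ) :
    Matrix (Fin n) (Fin (d + 1)) ℝ :=
  Matrix.of fun i => Fin.snoc (A i) (b i)

lemma appendCol_snoc {n d : ℕ} (A : Matrix (Fin n) (Fin d) ℝ) (b : Fin n → ℝ)
    (x : Fin d → ℝ) : (A.appendCol b) *ᵥ (Fin.snoc x (-1)) = A *ᵥ x - b := by
  funext i
  simp [Matrix.appendCol, Matrix.mulVec, dotProduct, Fin.sum_univ_castSucc]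
  ring


/-- Sketching reduction for constrained/regularized least squares: if `S` is a
`(1+ε)`-distortion embedding for `[A|b]` and `x̃ ∈ C` is a `(1+ε)`-approximate minimizer
of the sketched objective `f̃(x) = ‖SAx − Sb‖² + g(x)` over `C`, then
`f(x̃) ≤ (1+ε)⁶ inf_C f ≤ (1+10ε) inf_C f` for `f(x) = ‖Ax − b‖² + g(x)`. -/
theorem sketching_reduction_constrained_ls {n d mS : ℕ}
    (A : Matrix (Fin n) (Fin d) ℝ) (b : Fin n → ℝ)
    (g : (Fin d → ℝ) → ℝ) (hg : ∀ x, 0 ≤ g x)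
    (C : Set (Fin d → ℝ)) (hC : C.Nonempty)
    (S : Matrix (Fin mS) (Fin n) ℝ)
    (ε : ℝ) (hε0 : 0 < ε) (hε1 : ε ≤ 0.1)
    (f ftilde : (Fin d → ℝ) → ℝ)
    (hf : ∀ x, f x = (∑ i, (A *ᵥ x - b) i ^ 2) + g x)
    (hftilde : ∀ x, ftilde x = (∑ i, ((S * A) *ᵥ x - S *ᵥ b) i ^ 2) + g x)
    (hemb : ∀ y : Fin (d + 1) → ℝ,
      (1 + ε)⁻¹ * Real.sqrt (∑ i, ((A.appendCol b) *ᵥ y) i ^ 2) ≤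
        Real.sqrt (∑ i, (S *ᵥ ((A.appendCol b) *ᵥ y)) i ^ 2) ∧
      Real.sqrt (∑ i, (S *ᵥ ((A.appendCol b) *ᵥ y)) i ^ 2) ≤
        (1 + ε) * Real.sqrt (∑ i, ((A.appendCol b) *ᵥ y) i ^ 2))
    (xt : Fin d → ℝ) (hxt : xt ∈ C)
    (hopt : ftilde xt ≤ (1 + ε) * sInf (ftilde '' C)) :
    f xt ≤ (1 + ε) ^ 6 * sInf (f '' C) ∧
    (1 + ε) ^ 6 * sInf (f '' C) ≤ (1 + 10 * ε) * sInf (f '' C) := by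
  have hε : (0:ℝ) < 1 + ε := by linarith
  have hε2 : (1:ℝ) ≤ (1 + ε)^2 := by nlinarith
  -- squared comparisons
  have key : ∀ x : Fin d → ℝ,
      (∑ i, (A *ᵥ x - b) i ^ 2) ≤ (1+ε)^2 * (∑ i, ((S * A) *ᵥ x - S *ᵥ b) i ^ 2) ∧
      (∑ i, ((S * A) *ᵥ x - S *ᵥ b) i ^ 2) ≤ (1+ε)^2 * (∑ i, (A *ᵥ x - b) i ^ 2) := by
    intro x
    obtain ⟨h1, h2⟩ := hemb (Fin.snoc x (-1))
    rw [appendCol_snoc] at h1 h2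
    have hrw : S *ᵥ (A *ᵥ x - b) = (S * A) *ᵥ x - S *ᵥ b := by
      rw [Matrix.mulVec_sub, Matrix.mulVec_mulVec]
    rw [hrw] at h1 h2
    set u := ∑ i, (A *ᵥ x - b) i ^ 2 with hu
    set v := ∑ i, ((S * A) *ᵥ x - S *ᵥ b) i ^ 2 with hv
    have hu0 : 0 ≤ u := Finset.sum_nonneg fun i _ => sq_nonneg _
    have hv0 : 0 ≤ v := Finset.sum_nonneg fun i _ => sq_nonneg _
    constructor
    · have := mul_le_mul h1 h1 (by positivity) (Real.sqrt_nonneg _)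
      rw [Real.mul_self_sqrt hv0] at this
      have h' : (1+ε)⁻¹ * Real.sqrt u * ((1+ε)⁻¹ * Real.sqrt u)
          = (1+ε)⁻¹^2 * (Real.sqrt u * Real.sqrt u) := by ring
      rw [h', Real.mul_self_sqrt hu0] at this
      have : (1+ε)⁻¹^2 * u ≤ v := this
      calc u = (1+ε)^2 * ((1+ε)⁻¹^2 * u) := by
              field_simp
        _ ≤ (1+ε)^2 * v := by nlinarith
    · have := mul_le_mul h2 h2 (Real.sqrt_nonneg _) (by positivity)
      rw [Real.mul_self_sqrt hv0] at this
      calc v ≤ (1+ε) * Real.sqrt u * ((1+ε) * Real.sqrt u) := this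
        _ = (1+ε)^2 * (Real.sqrt u * Real.sqrt u) := by ring
        _ = (1+ε)^2 * u := by rw [Real.mul_self_sqrt hu0]
  have hfg : ∀ x, f x ≤ (1+ε)^2 * ftilde x := by
    intro x
    rw [hf, hftilde]
    have := (key x).1
    nlinarith [hg x]
  have hgf : ∀ x, ftilde x ≤ (1+ε)^2 * f x := by
    intro x
    rw [hf, hftilde]
    have := (key x).2
    nlinarith [hg x]
  have hf0 : ∀ x, 0 ≤ f x := by
    intro x; rw [hf]
    have : 0 ≤ ∑ i, (A *ᵥ x - b) i ^ 2 := Finset.sum_nonneg fun i _ => sq_nonneg _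
    linarith [hg x]
  have hft0 : ∀ x, 0 ≤ ftilde x := by
    intro x; rw [hftilde]
    have : 0 ≤ ∑ i, ((S*A) *ᵥ x - S *ᵥ b) i ^ 2 := Finset.sum_nonneg fun i _ => sq_nonneg _
    linarith [hg x]
  have hbddf : BddBelow (f '' C) := ⟨0, fun y ⟨x, _, hx⟩ => hx ▸ hf0 x⟩
  have hbddft : BddBelow (ftilde '' C) := ⟨0, fun y ⟨x, _, hx⟩ => hx ▸ hft0 x⟩
  have hne : (f '' C).Nonempty := hC.image f
  have hInff0 : 0 ≤ sInf (f '' C) := le_csInf hne (fun y ⟨x, _, hx⟩ => hx ▸ hf0 x)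
  -- sInf ftilde ≤ (1+ε)^2 sInf f
  have hinf1 : sInf (ftilde '' C) ≤ (1+ε)^2 * sInf (f '' C) := by
    have hlb : (1+ε)⁻¹^2 * sInf (ftilde '' C) ∈ lowerBounds (f '' C) := by
      rintro y ⟨x, hx, rfl⟩
      have h1 : sInf (ftilde '' C) ≤ ftilde x := csInf_le hbddft ⟨x, hx, rfl⟩
      have h2 := hgf x
      have hfx := hf0 x
      have : sInf (ftilde '' C) ≤ (1+ε)^2 * f x := le_trans h1 h2
      have hp : (0:ℝ) < (1+ε)^2 := by positivity
      rw [inv_pow]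
      rw [inv_mul_le_iff₀ hp]
      linarith [this]
    have := le_csInf hne hlb
    have hp : (0:ℝ) < (1+ε)^2 := by positivity
    calc sInf (ftilde '' C) = (1+ε)^2 * ((1+ε)⁻¹^2 * sInf (ftilde '' C)) := by
          field_simp
      _ ≤ (1+ε)^2 * sInf (f '' C) := by nlinarith
  have main : f xt ≤ (1+ε)^5 * sInf (f '' C) := by
    have h1 := hfg xt
    have h2 : ftilde xt ≤ (1+ε) * ((1+ε)^2 * sInf (f '' C)) := by
      refine le_trans hopt ?_
      have := hinf1
      nlinarith
    calc f xt ≤ (1+ε)^2 * ftilde xt := h1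
      _ ≤ (1+ε)^2 * ((1+ε) * ((1+ε)^2 * sInf (f '' C))) := by nlinarith [hft0 xt]
      _ = (1+ε)^5 * sInf (f '' C) := by ring
  constructor
  · calc f xt ≤ (1+ε)^5 * sInf (f '' C) := main
      _ ≤ (1+ε)^6 * sInf (f '' C) := by
          have h56 : (1+ε)^5 ≤ (1+ε)^6 :=
            pow_le_pow_right₀ (by linarith) (by norm_num)
          exact mul_le_mul_of_nonneg_right h56 hInff0
  · have e2 : ε^2 ≤ 0.1*ε := by nlinarith
    have e3 : ε^3 ≤ 0.01*ε := by nlinarith [mul_le_mul_of_nonneg_left e2 hε0.le]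
    have e4 : ε^4 ≤ 0.001*ε := by nlinarith [mul_le_mul_of_nonneg_left e3 hε0.le]
    have e5 : ε^5 ≤ 0.0001*ε := by nlinarith [mul_le_mul_of_nonneg_left e4 hε0.le]
    have e6 : ε^6 ≤ 0.00001*ε := by nlinarith [mul_le_mul_of_nonneg_left e5 hε0.le]
    have hexp : (1+ε)^6 = 1 + 6*ε + 15*ε^2 + 20*ε^3 + 15*ε^4 + 6*ε^5 + ε^6 := by ring
    have h6 : (1+ε)^6 ≤ 1 + 10*ε := by rw [hexp]; linarith
    nlinarith
end

section
/- Let (a_t)_{t≥0} be a sequence of nonnegative reals, β ∈ (0, 1/4], G ≥ 0 with 4βG ≤ 1/2, and C ≥ a_0 ≥ 0. Suppose that for all t ≥ 0, a_{t+1} ≤ (1 − β/(4u_t))·a_t + (β²/u_t²)·G·C, where u_t = 1 + βt/8. Then a_t ≤ C/u_t for all t ≥ 0. -/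
/-- Scalar induction underlying the convergence analysis of mini-batch SGD with
decaying step sizes `η_t = β / u_t`, where `u_t = 1 + β t / 8`. -/
theorem sgd_scalar_induction (a : ℕ → ℝ) (β G C : ℝ)
    (hβ0 : 0 < β) (hβ : β ≤ 1 / 4) (hG : 0 ≤ G) (hβG : 4 * β * G ≤ 1 / 2)
    (ha0 : ∀ t, 0 ≤ a t) (haC : a 0 ≤ C) (hC : 0 ≤ C)
    (hrec : ∀ t : ℕ, a (t + 1) ≤
      (1 - β / (4 * (1 + β * t / 8))) * a t + (β ^ 2 / (1 + β * t / 8) ^ 2) * G * C) :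
    ∀ t : ℕ, a t ≤ C / (1 + β * t / 8) := by
  intro t
  induction t with
  | zero => simpa using haC
  | succ n ih =>
    have hn : (0:ℝ) ≤ (n : ℝ) := Nat.cast_nonneg n
    set u : ℝ := 1 + β * n / 8 with hu
    clear_value u
    have hu1 : 1 ≤ u := by
      have h : 0 ≤ β * (n:ℝ) / 8 := by positivity
      simp only [hu]; linarith
    have hu0 : 0 < u := by linarith
    have hcoef : 0 ≤ 1 - β / (4 * u) := by
      have h1 : β / (4 * u) ≤ 1 := by
        rw [div_le_one (by linarith)]
        linarith
      linarith
    have h1 : a (n + 1) ≤ (1 - β / (4 * u)) * (C / u) + (β ^ 2 / u ^ 2) * G * C := by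
      have hrecn := hrec n
      rw [← hu] at hrecn
      refine hrecn.trans ?_
      have := mul_le_mul_of_nonneg_left ih hcoef
      linarith
    have heq : (1:ℝ) + β * ((n:ℕ) + 1 : ℕ) / 8 = u + β / 8 := by
      push_cast; rw [hu]; ring
    rw [heq]
    refine h1.trans ?_
    have hβG' : β ^ 2 * G ≤ β / 8 := by nlinarith
    have expand : ((1 - β / (4 * u)) * (C / u) + β ^ 2 / u ^ 2 * G * C)
        = C * (u - β / 4 + β ^ 2 * G) / u ^ 2 := by
      field_simp
    rw [expand, div_le_div_iff₀ (by positivity) (by linarith)]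
    have h2 : u - β / 4 + β ^ 2 * G ≤ u - β / 8 := by linarith
    have h3 : 0 ≤ u + β / 8 := by linarith
    nlinarith [mul_le_mul_of_nonneg_right (mul_le_mul_of_nonneg_right h2 h3) hC,
      mul_nonneg hC (sq_nonneg β)]
end
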